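/- arXiv:2009.03159 — 7 statements merged into one kernel-verified Lean document; each statement's English description precedes it below -/
import Mathlib

section
/- For all s, t ∈ F \ F_{q^2} with s ∉ {t, t^(q^2)}, the element ρ̂(s,t) is nonzero, satisfies ρ̂(s,t)^(q^2) = ρ̂(s,t) (i.e., ρ̂(s,t) ∈ F_{q^2}), and there exists α ∈ F_{q^2} with ρ̂(s,t) = α + α^2; in particular ρ̂(s,t) has absolute trace 0, i.e., ρ̂(s,t) ∈ T₀(q^2). -/
/-- The cross-ratio type quantity ρ(s,t) of Hollmann–Xiang. -/
def rhoPW {F : Type*} [Field F] (q : ℕ) (s t : F) : F :=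
  ((s + t) * (s ^ q ^ 2 + t ^ q ^ 2)) / ((s + t ^ q ^ 2) * (s ^ q ^ 2 + t))

/-- ρ̂(s,t) = 1/(ρ(s,t) + ρ(s,t)⁻¹). -/
def rhoHatPW {F : Type*} [Field F] (q : ℕ) (s t : F) : F :=
  (rhoPW q s t + (rhoPW q s t)⁻¹)⁻¹

/-!
Write `σ x = x ^ q ^ 2`; since `|F| = q ^ 4`, `σ` is an involutive ring automorphism of `F`, and
`ρ(s,t)` is invariant under it because `σ` swaps the two factors of the numerator and the two
factors of the denominator. In characteristic 2, `(ρ + ρ⁻¹)⁻¹ = ρ / (ρ + 1) ^ 2 = α + α ^ 2` with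
`α = ρ / (ρ + 1)`, which is again `σ`-invariant, and the absolute trace of `α + α ^ 2 ∈ F_{q^2}`
telescopes to `α + σ α = 0`.
-/

def crossRatio {F : Type*} [Field F] (σ : F →+* F) (s t : F) : F :=
  ((s + t) * (σ s + σ t)) / ((s + σ t) * (σ s + t))

section CrossRatio

variable {F : Type*} [Field F] (σ : F →+* F)

lemma rhoPW_eq_crossRatio {q : ℕ} (hσ : ∀ x, σ x = x ^ q ^ 2) (s t : F) :
    rhoPW q s t = crossRatio σ s t := by
  simp only [rhoPW, crossRatio, hσ]

lemma map_crossRatio (hσ : Function.Involutive σ) (s t : F) :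
    σ (crossRatio σ s t) = crossRatio σ s t := by
  simp only [crossRatio, map_div₀, map_mul, map_add, hσ _]
  ring

variable [CharP F 2] {σ} {s t : F}

lemma crossRatio_ne_zero (hσ : Function.Involutive σ) (hst : s ≠ t) (hsσt : s ≠ σ t) :
    crossRatio σ s t ≠ 0 := by
  have hσst : σ s ≠ t := fun h ↦ hsσt (by rw [← h, hσ])
  simp only [crossRatio, ne_eq, div_eq_zero_iff, mul_eq_zero, CharTwo.add_eq_zero,
    σ.injective.eq_iff]
  tauto

lemma crossRatio_ne_one (hσ : Function.Involutive σ) (hs : σ s ≠ s) (ht : σ t ≠ t)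
    (hsσt : s ≠ σ t) : crossRatio σ s t ≠ 1 := by
  have hden : (s + σ t) * (σ s + t) ≠ 0 :=
    mul_ne_zero (by rwa [ne_eq, CharTwo.add_eq_zero])
      (by rw [ne_eq, CharTwo.add_eq_zero]; exact fun h ↦ hsσt (by rw [← h, hσ]))
  rw [crossRatio, ne_eq, div_eq_one_iff_eq hden]
  intro h
  have hfactor : (s + σ s) * (t + σ t) = 0 := by
    linear_combination h + (s * t + σ s * σ t) * CharTwo.two_eq_zero (R := F)
  rcases mul_eq_zero.mp hfactor with h' | h'
  · exact hs (CharTwo.add_eq_zero.mp h').symm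
  · exact ht (CharTwo.add_eq_zero.mp h').symm

end CrossRatio

section CharTwo

variable {R : Type*} [CommRing R] [CharP R 2]

lemma sum_range_add_sq_pow_two_pow (a : R) (m : ℕ) :
    ∑ i ∈ Finset.range m, (a + a ^ 2) ^ 2 ^ i = a + a ^ 2 ^ m := by
  induction m with
  | zero => simp [CharTwo.add_self_eq_zero]
  | succ m ih =>
    rw [Finset.sum_range_succ, ih, add_pow_char_pow, ← pow_mul, ← pow_succ', add_assoc,
      CharTwo.add_cancel_left]

variable {K : Type*} [Field K] [CharP K 2]

lemma inv_add_inv_eq_div_add_sq (ρ : K) :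
    (ρ + ρ⁻¹)⁻¹ = ρ / (ρ + 1) + (ρ / (ρ + 1)) ^ 2 := by
  rcases eq_or_ne ρ 0 with rfl | hρ0
  · simp
  rcases eq_or_ne (ρ + 1) 0 with hρ1 | hρ1
  · rw [CharTwo.add_eq_zero.mp hρ1]
    simp [CharTwo.add_self_eq_zero]
  have hsum : ρ + ρ⁻¹ = (ρ + 1) ^ 2 / ρ := by
    rw [CharTwo.add_sq, one_pow]
    field_simp
  rw [hsum, inv_div]
  field_simp
  linear_combination -ρ * CharTwo.two_eq_zero (R := K)

lemma inv_add_inv_ne_zero {ρ : K} (h0 : ρ ≠ 0) (h1 : ρ ≠ 1) : (ρ + ρ⁻¹)⁻¹ ≠ 0 := by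
  refine inv_ne_zero fun h ↦ h1 (CharTwo.sq_inj.mp ?_)
  rw [sq, one_pow]
  nth_rewrite 2 [CharTwo.add_eq_zero.mp h]
  exact mul_inv_cancel₀ h0

end CharTwo

lemma charP_two_of_card_eq_two_pow {F : Type*} [Field F] [Fintype F] {n : ℕ}
    (hF : Fintype.card F = 2 ^ n) : CharP F 2 := by
  have h2n : (2 : F) ^ n = 0 := by exact_mod_cast hF ▸ FiniteField.cast_card_eq_zero F
  exact CharTwo.of_one_ne_zero_of_two_eq_zero one_ne_zero (eq_zero_of_pow_eq_zero h2n)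

theorem stmt_2_general (h q : ℕ) (hq : q = 2 ^ h)
    (F : Type*) [Field F] [Fintype F] (hF : Fintype.card F = q ^ 4)
    (s t : F) (hs : s ^ q ^ 2 ≠ s) (ht : t ^ q ^ 2 ≠ t)
    (h1 : s ≠ t) (h2 : s ≠ t ^ q ^ 2) :
    rhoHatPW q s t ≠ 0 ∧
    (rhoHatPW q s t) ^ q ^ 2 = rhoHatPW q s t ∧
    (∃ α : F, α ^ q ^ 2 = α ∧ rhoHatPW q s t = α + α ^ 2) ∧
    ∑ i ∈ Finset.range (2 * h), (rhoHatPW q s t) ^ 2 ^ i = 0 := by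
  have hq2 : q ^ 2 = 2 ^ (2 * h) := by rw [hq, ← pow_mul, mul_comm]
  have : CharP F 2 :=
    charP_two_of_card_eq_two_pow (n := 4 * h) (by rw [hF, hq, ← pow_mul, mul_comm])
  obtain ⟨σ, hσ⟩ : ∃ σ : F →+* F, ∀ x, σ x = x ^ q ^ 2 :=
    ⟨iterateFrobenius F 2 (2 * h), fun x ↦ by rw [iterateFrobenius_def, hq2]⟩
  have hσσ : Function.Involutive σ := fun x ↦ by
    rw [hσ, hσ, ← pow_mul, ← pow_add, show 2 + 2 = 4 from rfl, ← hF, FiniteField.pow_card]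
  rw [← hσ] at hs ht h2
  set ρ := rhoPW q s t
  have hρ : ρ = crossRatio σ s t := rhoPW_eq_crossRatio σ hσ s t
  set α := ρ / (ρ + 1)
  have hα : σ α = α := by simp only [α, map_div₀, map_add, map_one, hρ, map_crossRatio σ hσσ]
  have hhat : rhoHatPW q s t = α + α ^ 2 := inv_add_inv_eq_div_add_sq ρ
  refine ⟨?_, ?_, ⟨α, by rw [← hσ, hα], hhat⟩, ?_⟩
  · change (ρ + ρ⁻¹)⁻¹ ≠ 0
    rw [hρ]
    exact inv_add_inv_ne_zero (crossRatio_ne_zero hσσ h1 h2) (crossRatio_ne_one hσσ hs ht h2)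
  · rw [← hσ, hhat, map_add, map_pow, hα]
  rw [hhat, sum_range_add_sq_pow_two_pow, ← hq2, ← hσ, hα, CharTwo.add_self_eq_zero]

theorem stmt_2 (h q : ℕ) (hh : 1 ≤ h) (hq : q = 2 ^ h)
    (F : Type*) [Field F] [Fintype F] (hF : Fintype.card F = q ^ 4)
    (s t : F) (hs : s ^ q ^ 2 ≠ s) (ht : t ^ q ^ 2 ≠ t)
    (h1 : s ≠ t) (h2 : s ≠ t ^ q ^ 2) :
    rhoHatPW q s t ≠ 0 ∧
    (rhoHatPW q s t) ^ q ^ 2 = rhoHatPW q s t ∧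
    (∃ α : F, α ^ q ^ 2 = α ∧ rhoHatPW q s t = α + α ^ 2) ∧
    ∑ i ∈ Finset.range (2 * h), (rhoHatPW q s t) ^ 2 ^ i = 0 :=
  stmt_2_general h q hq F hF s t hs ht h1 h2
end

section
/- For every 2×2 matrix g over K with det g = 1, the linear map X ↦ (g ⊗ g^(q))·X of K^4 maps V̂ into V̂ and preserves Q: for all X = (X₁, X₂, X₃, X₄) ∈ K^4, Q((g ⊗ g^(q))·X) = Q(X), where Q(X) = X₁X₄ + X₂X₃. -/
/-- The Kronecker product `g ⊗ g^(q)` of a 2×2 matrix `g` with its entrywise `q`-th power,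
acting on `K^4` indexed by `Fin 2 × Fin 2` in the ordering `e₁⊗e₁, e₁⊗e₂, e₂⊗e₁, e₂⊗e₂`. -/
def kronPW {K : Type*} [Field K] (q : ℕ) (g : Matrix (Fin 2) (Fin 2) K) :
    Matrix (Fin 2 × Fin 2) (Fin 2 × Fin 2) K :=
  Matrix.kroneckerMap (· * ·) g (g.map (· ^ q))

/-- Membership of a vector `X ∈ K^4` in `V̂ = {(α, x^q, x, β) : α, β ∈ F_q, x ∈ K}`:
the first and last coordinates lie in `F_q` and the second is the `q`-th power of the third. -/
def memVhat {K : Type*} [Field K] (q : ℕ) (X : Fin 2 × Fin 2 → K) : Prop :=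
  (X (0, 0)) ^ q = X (0, 0) ∧ (X (1, 1)) ^ q = X (1, 1) ∧ X (0, 1) = (X (1, 0)) ^ q


lemma Qkey {K : Type*} [Field K] (a b c d aq bq cq dq x1 x2 x3 x4 : K)
    (h2 : (2:K) = 0) (hd : a*d - b*c = 1) (hdq : aq*dq - bq*cq = 1) :
    (a*aq*x1 + a*bq*x2 + (b*aq*x3 + b*bq*x4)) * (c*cq*x1 + c*dq*x2 + (d*cq*x3 + d*dq*x4))
      + (a*cq*x1 + a*dq*x2 + (b*cq*x3 + b*dq*x4)) * (c*aq*x1 + c*bq*x2 + (d*aq*x3 + d*bq*x4))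
    = x1*x4 + x2*x3 := by
  linear_combination ((aq*dq - bq*cq) * (x1*x4 - x2*x3)) * hd + (x1*x4 - x2*x3) * hdq +
    ((a*cq*x1 + a*dq*x2 + b*cq*x3 + b*dq*x4) * (c*aq*x1 + c*bq*x2 + d*aq*x3 + d*bq*x4) - x2*x3) * h2

lemma mem1 {K : Type*} [Field K] (q : ℕ) (a b x1 x2 x3 x4 : K)
    (hadd : ∀ u v : K, (u+v)^q = u^q + v^q) (hpow : ∀ x : K, (x^q)^q = x)
    (h1 : x1^q = x1) (h4 : x4^q = x4) (h23 : x2 = x3^q) :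
    (a*a^q*x1 + a*b^q*x2 + (b*a^q*x3 + b*b^q*x4))^q
      = a*a^q*x1 + a*b^q*x2 + (b*a^q*x3 + b*b^q*x4) := by
  subst h23
  rw [hadd, hadd, hadd]
  simp only [mul_pow, hpow, h1, h4]
  ring

lemma mem3 {K : Type*} [Field K] (q : ℕ) (a b c d x1 x2 x3 x4 : K)
    (hadd : ∀ u v : K, (u+v)^q = u^q + v^q) (hpow : ∀ x : K, (x^q)^q = x)
    (h1 : x1^q = x1) (h4 : x4^q = x4) (h23 : x2 = x3^q) :
    a*c^q*x1 + a*d^q*x2 + (b*c^q*x3 + b*d^q*x4)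
      = (c*a^q*x1 + c*b^q*x2 + (d*a^q*x3 + d*b^q*x4))^q := by
  subst h23
  rw [hadd, hadd, hadd]
  simp only [mul_pow, hpow, h1, h4]
  ring

theorem stmt_6 (h q : ℕ) (hh : 1 ≤ h) (hq : q = 2 ^ h)
    (K : Type*) [Field K] [Fintype K] (hK : Fintype.card K = q ^ 2)
    (g : Matrix (Fin 2) (Fin 2) K) (hg : g.det = 1) :
    (∀ X : Fin 2 × Fin 2 → K, memVhat q X → memVhat q ((kronPW q g).mulVec X)) ∧
    (∀ X : Fin 2 × Fin 2 → K,
      ((kronPW q g).mulVec X) (0, 0) * ((kronPW q g).mulVec X) (1, 1) +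
        ((kronPW q g).mulVec X) (0, 1) * ((kronPW q g).mulVec X) (1, 0) =
      X (0, 0) * X (1, 1) + X (0, 1) * X (1, 0)) := by
  -- characteristic 2
  obtain ⟨p, hpchar⟩ := CharP.exists K
  haveI := hpchar
  obtain ⟨n, hp, hcard⟩ := FiniteField.card K p
  have hp2 : p = 2 := by
    have hdvd : p ∣ 2 ^ (h * 2) := by
      have : p ∣ Fintype.card K := hcard ▸ dvd_pow_self p n.ne_zero
      rwa [hK, hq, ← pow_mul] at this
    exact (Nat.prime_dvd_prime_iff_eq hp Nat.prime_two).mp (hp.dvd_of_dvd_pow hdvd)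
  subst hp2
  haveI : Fact (Nat.Prime 2) := ⟨Nat.prime_two⟩
  have h2 : (2:K) = 0 := CharP.cast_eq_zero K 2
  have hadd : ∀ u v : K, (u+v)^q = u^q + v^q := fun u v => by
    rw [hq]; exact add_pow_char_pow (x:=u) (y:=v) 2 h
  have hpow : ∀ x : K, (x^q)^q = x := fun x => by
    rw [← pow_mul, ← pow_two, ← hK]; exact FiniteField.pow_card x
  have hd : g 0 0 * g 1 1 - g 0 1 * g 1 0 = 1 := by rw [← Matrix.det_fin_two]; exact hg
  have hdq : (g 0 0)^q * (g 1 1)^q - (g 0 1)^q * (g 1 0)^q = 1 := by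
    have := congrArg (· ^ q) hd
    simp only [hq, sub_pow_char_pow, mul_pow, one_pow] at this
    rw [hq]; exact this
  constructor
  · rintro X ⟨hX1, hX2, hX3⟩
    refine ⟨?_, ?_, ?_⟩ <;>
      simp only [kronPW, Matrix.mulVec, dotProduct, Fintype.sum_prod_type,
        Fin.sum_univ_two, Matrix.kroneckerMap, Matrix.map, Matrix.of_apply]
    · exact mem1 q (g 0 0) (g 0 1) (X (0,0)) (X (0,1)) (X (1,0)) (X (1,1)) hadd hpow hX1 hX2 hX3
    · exact mem1 q (g 1 0) (g 1 1) (X (0,0)) (X (0,1)) (X (1,0)) (X (1,1)) hadd hpow hX1 hX2 hX3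
    · exact mem3 q (g 0 0) (g 0 1) (g 1 0) (g 1 1) (X (0,0)) (X (0,1)) (X (1,0)) (X (1,1)) hadd hpow hX1 hX2 hX3
  · intro X
    simp only [kronPW, Matrix.mulVec, dotProduct, Fintype.sum_prod_type,
      Fin.sum_univ_two, Matrix.kroneckerMap, Matrix.map, Matrix.of_apply]
    exact Qkey (g 0 0) (g 0 1) (g 1 0) (g 1 1) ((g 0 0)^q) ((g 0 1)^q) ((g 1 0)^q) ((g 1 1)^q)
      (X (0,0)) (X (0,1)) (X (1,0)) (X (1,1)) h2 hd hdq
end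

section
/- For every t ∈ F \ F_{q^2}: (i) every component of X_λ(t) lies in F_{q^2} for all λ ∈ F; (ii) h(X_λ(t), X_λ(t)) = 0 for all λ ∈ F; (iii) the map λ ↦ X_λ(t) from F to (F_{q^2})^4 is additive, F_{q^2}-homogeneous (X_{cλ}(t) = c·X_λ(t) for c ∈ F_{q^2}), and injective; consequently m_t is a 2-dimensional F_{q^2}-subspace of (F_{q^2})^4 consisting of h-isotropic vectors. -/
/-- The vector `X_λ(t)` spanning the line `m_𝐭`. -/
def XvecPW {F : Type*} [Field F] (q : ℕ) (t l : F) : Fin 4 → F :=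
  ![l + l ^ q ^ 2,
    l * t ^ q + l ^ q ^ 2 * t ^ q ^ 3,
    l * t + l ^ q ^ 2 * t ^ q ^ 2,
    l * t ^ (q + 1) + l ^ q ^ 2 * t ^ (q ^ 2 + q ^ 3)]

/-- The hermitian form `h(X,Y) = X₁Y₄^q + X₂Y₂^q + X₃Y₃^q + X₄Y₁^q`. -/
def hermPW {F : Type*} [Field F] (q : ℕ) (X Y : Fin 4 → F) : F :=
  X 0 * Y 3 ^ q + X 1 * Y 1 ^ q + X 2 * Y 2 ^ q + X 3 * Y 0 ^ q

theorem stmt_8 (h q : ℕ) (hh : 1 ≤ h) (hq : q = 2 ^ h)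
    (F : Type*) [Field F] [Fintype F] (hF : Fintype.card F = q ^ 4)
    (t : F) (ht : t ^ q ^ 2 ≠ t) :
    (∀ (l : F) (i : Fin 4), (XvecPW q t l i) ^ q ^ 2 = XvecPW q t l i) ∧
    (∀ l : F, hermPW q (XvecPW q t l) (XvecPW q t l) = 0) ∧
    (∀ l m : F, XvecPW q t (l + m) = XvecPW q t l + XvecPW q t m) ∧
    (∀ c l : F, c ^ q ^ 2 = c → XvecPW q t (c * l) = c • XvecPW q t l) ∧
    Function.Injective (XvecPW q t) ∧
    (Set.range (XvecPW q t)).ncard = (q ^ 2) ^ 2 := by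
  -- characteristic 2
  haveI : CharP F (ringChar F) := ringChar.charP F
  have hprime : (ringChar F).Prime := CharP.char_is_prime F (ringChar F)
  haveI : Fact (ringChar F).Prime := ⟨hprime⟩
  obtain ⟨n, -, hn⟩ := FiniteField.card F (ringChar F)
  have hr2 : ringChar F = 2 := by
    have hdvd : ringChar F ∣ 2 ^ (h * 4) := by
      rw [hF, hq, ← pow_mul] at hn
      rw [hn]
      exact dvd_pow_self _ (by positivity)
    have := hprime.dvd_of_dvd_pow hdvd
    exact (Nat.prime_dvd_prime_iff_eq hprime Nat.prime_two).mp this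
  haveI char2 : CharP F 2 := hr2 ▸ (ringChar.charP F)
  have h2f : (2 : F) = 0 := by exact_mod_cast CharP.cast_eq_zero F 2
  -- frobenius facts
  have hadd : ∀ (n : ℕ) (x y : F), (x + y) ^ q ^ n = x ^ q ^ n + y ^ q ^ n := by
    intro n x y
    subst hq
    rw [← pow_mul]
    exact add_pow_char_pow x y 2 _
  have hadd1 : ∀ x y : F, (x + y) ^ q = x ^ q + y ^ q := by
    intro x y; have := hadd 1 x y; simpa using this
  have hq4 : ∀ x : F, x ^ q ^ 4 = x := fun x => by rw [← hF]; exact FiniteField.pow_card x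
  have hA2 : ∀ x : F, (x ^ q ^ 2) ^ q ^ 2 = x := fun x => by
    rw [← pow_mul, ← pow_add]; exact hq4 x
  have hA1 : ∀ x : F, (x ^ q) ^ q ^ 2 = x ^ q ^ 3 := fun x => by
    rw [← pow_mul, show q * q ^ 2 = q ^ 3 from by ring]
  have hA3 : ∀ x : F, (x ^ q ^ 3) ^ q ^ 2 = x ^ q := fun x => by
    rw [← pow_mul]
    have e : q ^ 3 * q ^ 2 = q * q ^ 4 := by ring
    rw [e, pow_mul]
    exact hq4 (x ^ q)
  have hB1 : ∀ x : F, (x ^ q) ^ q = x ^ q ^ 2 := fun x => by rw [← pow_mul, show q * q = q ^ 2 from by ring]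
  have hB2 : ∀ x : F, (x ^ q ^ 2) ^ q = x ^ q ^ 3 := fun x => by rw [← pow_mul, show q ^ 2 * q = q ^ 3 from by ring]
  have hB3 : ∀ x : F, (x ^ q ^ 3) ^ q = x := fun x => by
    rw [← pow_mul]
    have e : q ^ 3 * q = q ^ 4 := by ring
    rw [e]; exact hq4 x
  have part1 : ∀ (l : F) (i : Fin 4), (XvecPW q t l i) ^ q ^ 2 = XvecPW q t l i := by
    intro l i
    fin_cases i <;>
      simp only [XvecPW, Fin.zero_eta, Fin.mk_one, Fin.reduceFinMk, Matrix.cons_val_zero, Matrix.cons_val_one, Matrix.head_cons,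
        Matrix.cons_val_two, Matrix.tail_cons, Matrix.cons_val_three, Fin.isValue,
        pow_add, pow_one, hadd, mul_pow, hA1, hA2, hA3] <;> ring
  have part2 : ∀ l : F, hermPW q (XvecPW q t l) (XvecPW q t l) = 0 := by
    intro l
    simp only [hermPW, XvecPW, Fin.zero_eta, Fin.mk_one, Fin.reduceFinMk, Matrix.cons_val_zero, Matrix.cons_val_one, Matrix.head_cons,
      Matrix.cons_val_two, Matrix.tail_cons, Matrix.cons_val_three, Fin.isValue,
      pow_add, pow_one, hadd1, mul_pow, hB1, hB2, hB3]
    linear_combination (l*l^q*t^q*t^(q^2) + l*l^(q^3)*t*t^(q^3) + l^q*l^(q^2)*t^q*t^(q^2)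
      + l^(q^2)*l^(q^3)*t*t^(q^3) + l*l^(q^3)*t*t^q + l^q*l^(q^2)*t^(q^2)*t^(q^3)
      + l*l^q*t*t^q + l^(q^2)*l^(q^3)*t^(q^2)*t^(q^3)) * h2f
  have part3 : ∀ l m : F, XvecPW q t (l + m) = XvecPW q t l + XvecPW q t m := by
    intro l m
    funext i
    fin_cases i <;>
      simp only [XvecPW, Pi.add_apply, Fin.zero_eta, Fin.mk_one, Fin.reduceFinMk, Matrix.cons_val_zero, Matrix.cons_val_one,
        Matrix.head_cons, Matrix.cons_val_two, Matrix.tail_cons, Matrix.cons_val_three,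
        Fin.isValue, hadd] <;> ring
  have part4 : ∀ c l : F, c ^ q ^ 2 = c → XvecPW q t (c * l) = c • XvecPW q t l := by
    intro c l hc
    funext i
    fin_cases i <;>
      simp only [XvecPW, Pi.smul_apply, smul_eq_mul, Fin.zero_eta, Fin.mk_one, Fin.reduceFinMk, Matrix.cons_val_zero, Matrix.cons_val_one,
        Matrix.head_cons, Matrix.cons_val_two, Matrix.tail_cons, Matrix.cons_val_three,
        Fin.isValue, mul_pow, hc] <;> ring
  have part5 : Function.Injective (XvecPW q t) := by
    intro l m hlm
    have h0 := congrFun hlm 0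
    have h2c := congrFun hlm 2
    simp only [XvecPW, Fin.zero_eta, Fin.mk_one, Fin.reduceFinMk, Matrix.cons_val_zero, Matrix.cons_val_two, Matrix.tail_cons,
      Matrix.head_cons, Fin.isValue] at h0 h2c
    have hd : l ^ q ^ 2 = l + m + m ^ q ^ 2 := by linear_combination h0 - l * h2f
    have hmul : (l + m) * (t + t ^ q ^ 2) = 0 := by
      linear_combination h2c - t ^ q ^ 2 * hd + m * t * h2f
    have hne : t + t ^ q ^ 2 ≠ 0 := fun hzero => ht (by linear_combination hzero - t * h2f)
    have hsum : l + m = 0 := by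
      rcases mul_eq_zero.mp hmul with h' | h'
      · exact h'
      · exact absurd h' hne
    linear_combination hsum - m * h2f
  refine ⟨part1, part2, part3, part4, part5, ?_⟩
  calc (Set.range (XvecPW q t)).ncard
      = Nat.card (Set.range (XvecPW q t)) := (Nat.card_coe_set_eq _).symm
    _ = Nat.card F := Nat.card_range_of_injective part5
    _ = q ^ 4 := by rw [Nat.card_eq_fintype_card, hF]
    _ = (q ^ 2) ^ 2 := by ring
end

section
/- Let t ∈ F \ F_{q^2} and μ, μ' ∈ F. All four components of the vector μ·(1, t^q, t, t^(q+1)) + μ'·(1, t^(q^3), t^(q^2), t^(q^2+q^3)) lie in F_{q^2} if and only if μ' = μ^(q^2). -/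
/-!
Write `σ x = x ^ q²`. Since `F` has characteristic `2` and `q⁴ = |F|`, `σ` is a ring endomorphism
of `F` with `σ ∘ σ = id`, and the four components are `μ a + μ' σ a` for
`a = 1, t^q, t, t^(q+1)`. If `μ' = σ μ` each component is `b + σ b` with `b = μ a`, hence fixed by
`σ`. Conversely, applying `σ` to the first and third components gives
`(μ' - σ μ) (σ t - t) = 0`, and `σ t ≠ t`.
-/

section Involution

variable {K : Type*} [Field K] {σ : K →+* K}

theorem RingHom.map_mul_add_map_mul_map_of_involutive (hσ : Function.Involutive σ) (μ x : K) :
    σ (μ * x + σ μ * σ x) = μ * x + σ μ * σ x := by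
  rw [map_add, map_mul, map_mul, hσ, hσ, add_comm]

theorem RingHom.eq_map_of_involutive_of_map_ne (hσ : Function.Involutive σ) {t μ μ' : K}
    (ht : σ t ≠ t) (h₁ : σ (μ + μ') = μ + μ') (h₂ : σ (μ * t + μ' * σ t) = μ * t + μ' * σ t) :
    μ' = σ μ := by
  simp only [map_add, map_mul, hσ _] at h₁ h₂
  have key : (μ' - σ μ) * (σ t - t) = 0 := by linear_combination t * h₁ - h₂
  rcases mul_eq_zero.mp key with h | h
  · exact sub_eq_zero.mp h
  · exact absurd (sub_eq_zero.mp h) ht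

end Involution

theorem FiniteField.exists_involutive_ringHom_eq_pow_sq {F : Type*} [Field F] [Fintype F]
    {h q : ℕ} (hq : q = 2 ^ h) (hF : Fintype.card F = q ^ 4) :
    ∃ σ : F →+* F, Function.Involutive σ ∧ ∀ x, σ x = x ^ q ^ 2 := by
  have : Fact (Nat.Prime 2) := ⟨Nat.prime_two⟩
  have : CharP F 2 := charP_of_card_eq_prime_pow (f := h * 4) (by rw [hF, hq, pow_mul])
  have hσ : ∀ x : F, iterateFrobenius F 2 (h * 2) x = x ^ q ^ 2 := fun x => by
    rw [iterateFrobenius_def, pow_mul, hq]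
  refine ⟨iterateFrobenius F 2 (h * 2), fun x => ?_, hσ⟩
  rw [hσ, hσ, ← pow_mul, ← pow_add, show 2 + 2 = 4 from rfl, ← hF, FiniteField.pow_card]

theorem stmt_9_general (h q : ℕ) (hq : q = 2 ^ h)
    (F : Type*) [Field F] [Fintype F] (hF : Fintype.card F = q ^ 4)
    (t : F) (ht : t ^ q ^ 2 ≠ t) (μ μ' : F) :
    ((μ * 1 + μ' * 1) ^ q ^ 2 = μ * 1 + μ' * 1 ∧
      (μ * t ^ q + μ' * t ^ q ^ 3) ^ q ^ 2 = μ * t ^ q + μ' * t ^ q ^ 3 ∧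
      (μ * t + μ' * t ^ q ^ 2) ^ q ^ 2 = μ * t + μ' * t ^ q ^ 2 ∧
      (μ * t ^ (q + 1) + μ' * t ^ (q ^ 2 + q ^ 3)) ^ q ^ 2 =
        μ * t ^ (q + 1) + μ' * t ^ (q ^ 2 + q ^ 3)) ↔
    μ' = μ ^ q ^ 2 := by
  obtain ⟨σ, hσ, hσ_pow⟩ := FiniteField.exists_involutive_ringHom_eq_pow_sq hq hF
  have h₃ : t ^ q ^ 3 = (t ^ q) ^ q ^ 2 := by rw [← pow_mul]; ring_nf
  have h₄ : t ^ (q ^ 2 + q ^ 3) = (t ^ (q + 1)) ^ q ^ 2 := by rw [← pow_mul]; ring_nf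
  rw [h₃, h₄]
  simp only [← hσ_pow, mul_one] at ht ⊢
  constructor
  · rintro ⟨h₁, -, h₂, -⟩
    exact RingHom.eq_map_of_involutive_of_map_ne hσ ht h₁ h₂
  · rintro rfl
    exact ⟨by simpa using RingHom.map_mul_add_map_mul_map_of_involutive hσ μ 1,
      RingHom.map_mul_add_map_mul_map_of_involutive hσ μ _,
      RingHom.map_mul_add_map_mul_map_of_involutive hσ μ _,
      RingHom.map_mul_add_map_mul_map_of_involutive hσ μ _⟩

/-- All four components of `μ·(1, t^q, t, t^(q+1)) + μ'·(1, t^(q³), t^(q²), t^(q²+q³))`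
lie in `F_{q²}` if and only if `μ' = μ^(q²)`. -/
theorem stmt_9 (h q : ℕ) (hh : 1 ≤ h) (hq : q = 2 ^ h)
    (F : Type*) [Field F] [Fintype F] (hF : Fintype.card F = q ^ 4)
    (t : F) (ht : t ^ q ^ 2 ≠ t) (μ μ' : F) :
    ((μ * 1 + μ' * 1) ^ q ^ 2 = μ * 1 + μ' * 1 ∧
      (μ * t ^ q + μ' * t ^ q ^ 3) ^ q ^ 2 = μ * t ^ q + μ' * t ^ q ^ 3 ∧
      (μ * t + μ' * t ^ q ^ 2) ^ q ^ 2 = μ * t + μ' * t ^ q ^ 2 ∧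
      (μ * t ^ (q + 1) + μ' * t ^ (q ^ 2 + q ^ 3)) ^ q ^ 2 =
        μ * t ^ (q + 1) + μ' * t ^ (q ^ 2 + q ^ 3)) ↔
    μ' = μ ^ q ^ 2 :=
  stmt_9_general h q hq F hF t ht μ μ'
end

section
/- For every t ∈ F \ F_{q^2} and every λ ∈ F with X_λ(t) ≠ 0, there do not exist a ∈ F_{q^2}, α, β ∈ F_q and x ∈ F_{q^2} such that X_λ(t) = a·(α, x^q, x, β). In other words, no nonzero vector of m_t is an F_{q^2}-scalar multiple of a vector of V̂; i.e., the line m_t is disjoint from the extension of W(3,q). -/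
/-- No nonzero vector of `m_t` is an `F_{q²}`-scalar multiple of a vector
`(α, x^q, x, β)` of `V̂` (with `α, β ∈ F_q`, `x ∈ F_{q²}`): the line `m_t` is disjoint
from the extension `Ŵ` of `W(3,q)`. -/
theorem stmt_10 (h q : ℕ) (hh : 1 ≤ h) (hq : q = 2 ^ h)
    (F : Type*) [Field F] [Fintype F] (hF : Fintype.card F = q ^ 4)
    (t : F) (ht : t ^ q ^ 2 ≠ t) (l : F) (hl : XvecPW q t l ≠ 0) :
    ¬ ∃ a α x β : F, a ^ q ^ 2 = a ∧ α ^ q = α ∧ β ^ q = β ∧ x ^ q ^ 2 = x ∧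
        XvecPW q t l = a • ![α, x ^ q, x, β] := by
  rintro ⟨a, α, x, β, ha, hα, hβ, hx, heq⟩
  have hq0 : q ≠ 0 := by rw [hq]; positivity
  -- characteristic 2
  have hchar : CharP F 2 := by
    obtain ⟨p, hpc⟩ := CharP.exists F
    haveI := hpc
    have hp : p.Prime := CharP.char_is_prime F p
    obtain ⟨n, hnp, hn⟩ := FiniteField.card F p
    have hp2 : p = 2 := by
      have he : p ^ (n : ℕ) = 2 ^ (h * 4) := by rw [← hn, hF, hq, ← pow_mul]
      have hd : p ∣ 2 ^ (h * 4) := he ▸ dvd_pow_self p n.pos.ne'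
      exact (Nat.prime_dvd_prime_iff_eq hp Nat.prime_two).mp (hp.dvd_of_dvd_pow hd)
    subst hp2; exact hpc
  haveI := hchar
  have two : (2 : F) = 0 := by exact_mod_cast CharP.cast_eq_zero F 2
  haveI : Fact (Nat.Prime 2) := ⟨Nat.prime_two⟩
  have frob : ∀ u v : F, (u + v) ^ q = u ^ q + v ^ q := by
    intro u v; rw [hq]; exact add_pow_char_pow u v 2 h
  have ht4 : t ^ q ^ 4 = t := by rw [← hF]; exact FiniteField.pow_card t
  -- components
  have e0 := congrFun heq 0
  have e1 := congrFun heq 1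
  have e2 := congrFun heq 2
  have e3 := congrFun heq 3
  simp only [XvecPW, Matrix.cons_val_zero, Matrix.cons_val_one, Matrix.head_cons,
    Matrix.cons_val_two, Matrix.cons_val_three, Matrix.tail_cons, Pi.smul_apply,
    smul_eq_mul, Matrix.cons_val_fin_one, Matrix.cons_val'] at e0 e1 e2 e3
  -- a ≠ 0
  rcases eq_or_ne a 0 with rfl | ha0
  · apply hl
    rw [heq, zero_smul]
  have hs : t ^ q ^ 2 + t ≠ 0 := by
    intro hs0; exact ht (by linear_combination hs0 - t * two)
  have hsq : t ^ q + t ^ q ^ 3 ≠ 0 := by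
    have hrw : (t ^ q ^ 2 + t) ^ q = t ^ q + t ^ q ^ 3 := by
      rw [frob, ← pow_mul, show q ^ 2 * q = q ^ 3 by ring, add_comm]
    rw [← hrw]
    exact pow_ne_zero q hs
  -- frobenius of components
  have f0 : l ^ q + l ^ (q ^ 2 * q) = a ^ q * α := by
    have := congrArg (· ^ q) e0
    simpa [frob, mul_pow, hα, ← pow_mul] using this
  have f2 : l ^ q * t ^ q + l ^ (q ^ 2 * q) * t ^ (q ^ 2 * q) = a ^ q * x ^ q := by
    have := congrArg (· ^ q) e2
    simpa [frob, mul_pow, ← pow_mul] using this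
  -- a * l^q = a^q * l
  have key1 : (a * l ^ q + a ^ q * l) * (t ^ q + t ^ q ^ 3) = 0 := by
    linear_combination (a * f2 - a ^ q * e1) - t ^ q ^ 3 * (a * f0 - a ^ q * e0) +
      (a ^ q * l * t ^ q + a * l ^ q * t ^ q ^ 3) * two
  have hA' : a * l ^ q + a ^ q * l = 0 :=
    (mul_eq_zero.mp key1).resolve_right hsq
  have hA : a * l ^ q = a ^ q * l := by
    linear_combination hA' - a ^ q * l * two
  -- l ∈ F_{q^2}
  have hll : l ^ q ^ 2 = l := by
    have hq' := congrArg (· ^ q) hA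
    have h2 : a ^ q * l ^ (q * q) = a ^ (q * q) * l ^ q := by
      simpa [mul_pow, ← pow_mul] using hq'
    have haq : a ^ (q * q) = a := by rw [show q * q = q ^ 2 by ring]; exact ha
    rw [haq, hA] at h2
    have := mul_left_cancel₀ (pow_ne_zero q ha0) h2
    rw [show q ^ 2 = q * q by ring]; exact this
  -- l ≠ 0
  have hl0 : l ≠ 0 := by
    rintro rfl
    apply hl
    funext i
    fin_cases i <;>
      simp [XvecPW, zero_pow (pow_ne_zero 2 hq0)]
  -- final contradiction from component 3
  rw [hll] at e3
  have f3 : l ^ q * t ^ (q ^ 2 + q) + l ^ q * (t ^ q ^ 3 * t) = a ^ q * β := by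
    have hc := congrArg (· ^ q) e3
    have hex1 : (t ^ (q + 1)) ^ q = t ^ (q ^ 2 + q) := by
      rw [← pow_mul]; ring_nf
    have hex2 : (t ^ (q ^ 2 + q ^ 3)) ^ q = t ^ q ^ 3 * t := by
      rw [← pow_mul, show (q ^ 2 + q ^ 3) * q = q ^ 3 + q ^ 4 by ring, pow_add, ht4]
    simpa [frob, mul_pow, hβ, hex1, hex2] using hc
  have hzero : a ^ q * l * ((t ^ q ^ 2 + t) * (t ^ q + t ^ q ^ 3)) = 0 := by
    linear_combination a ^ q * e3 - a * f3 + (t ^ (q ^ 2 + q) + t ^ q ^ 3 * t) * hA +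
      a ^ q * l * (t ^ (q ^ 2 + q) + t ^ q ^ 3 * t) * two
  exact absurd hzero
    (mul_ne_zero (mul_ne_zero (pow_ne_zero q ha0) hl0) (mul_ne_zero hs hsq))
end

section
/- For all s, t ∈ F \ F_{q^2} with s ∉ {t, t^(q^2)} and t ∉ {s, s^(q^2)}: the F_{q^2}-subspaces m_s and m_t of (F_{q^2})^4 intersect nontrivially (i.e., m_s ∩ m_t ≠ {0}) if and only if ρ̂(s,t) ∈ S₀*, that is, if and only if ρ̂(s,t) is a nonzero element of F_q of absolute trace 0. -/
set_option maxHeartbeats 4000000 in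
/-- The lines `m_𝐬` and `m_𝐭` meet nontrivially iff `ρ̂(s,t) ∈ S₀* = T₀(q) \ {0}`,
i.e. iff `ρ̂(s,t)` is a nonzero element of `F_q` of absolute trace 0. -/
theorem stmt_11 (h q : ℕ) (hh : 1 ≤ h) (hq : q = 2 ^ h)
    (F : Type*) [Field F] [Fintype F] (hF : Fintype.card F = q ^ 4)
    (s t : F) (hs : s ^ q ^ 2 ≠ s) (ht : t ^ q ^ 2 ≠ t)
    (h1 : s ≠ t) (h2 : s ≠ t ^ q ^ 2) (h3 : t ≠ s ^ q ^ 2) :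
    (∃ l m : F, XvecPW q s l = XvecPW q t m ∧ XvecPW q s l ≠ 0) ↔
      (rhoHatPW q s t ≠ 0 ∧ (rhoHatPW q s t) ^ q = rhoHatPW q s t ∧
        ∑ i ∈ Finset.range h, (rhoHatPW q s t) ^ 2 ^ i = 0) := by
  -- characteristic 2 setup
  have hq0 : q ≠ 0 := by rw [hq]; positivity
  have hq20 : q ^ 2 ≠ 0 := pow_ne_zero 2 hq0
  haveI hcharp := ringChar.charP F
  obtain ⟨n, hp, hcard⟩ := FiniteField.card F (ringChar F)
  have hp2 : ringChar F = 2 := by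
    have hdvd : ringChar F ∣ 2 ^ (h * 4) := by
      have hh2 : (ringChar F) ^ (n : ℕ) = 2 ^ (h * 4) := by rw [← hcard, hF, hq, ← pow_mul]
      calc ringChar F ∣ (ringChar F) ^ (n : ℕ) := dvd_pow_self _ n.ne_zero
        _ = 2 ^ (h * 4) := hh2
    exact (Nat.prime_dvd_prime_iff_eq hp Nat.prime_two).mp (hp.dvd_of_dvd_pow hdvd)
  haveI hchar : CharP F 2 := hp2 ▸ hcharp
  haveI : ExpChar F 2 := ExpChar.prime Nat.prime_two
  have htwo : (2 : F) = 0 := by exact_mod_cast CharP.cast_eq_zero F 2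
  have frq : ∀ x y : F, (x + y) ^ q = x ^ q + y ^ q := fun x y => by
    rw [hq]; exact add_pow_expChar_pow x y 2 h
  have pow4 : ∀ x : F, (((x ^ q) ^ q) ^ q) ^ q = x := fun x => by
    have hpc := FiniteField.pow_card x
    rw [hF] at hpc
    calc (((x ^ q) ^ q) ^ q) ^ q = x ^ q ^ 4 := by rw [← pow_mul, ← pow_mul, ← pow_mul]; ring_nf
      _ = x := hpc
  have injq : ∀ {x y : F}, x ^ q = y ^ q → x = y := fun {x y} hxy => by
    rw [← pow4 x, ← pow4 y, hxy]
  have addz : ∀ {x y : F}, x + y = 0 → x = y := fun {x y} hxy => by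
    rw [← CharTwo.neg_eq y]; exact eq_neg_of_add_eq_zero_left hxy
  have e2q : ∀ x : F, x ^ q ^ 2 = (x ^ q) ^ q := fun x => by rw [pow_two, pow_mul]
  have e3q : ∀ x : F, x ^ q ^ 3 = ((x ^ q) ^ q) ^ q := fun x => by
    rw [show q ^ 3 = q * q * q by ring, pow_mul, pow_mul]
  have epq : ∀ x : F, x ^ (q + 1) = x ^ q * x := fun x => by rw [pow_succ, mul_comm]
  have e23q : ∀ x : F, x ^ (q ^ 2 + q ^ 3) = (x ^ q) ^ q * ((x ^ q) ^ q) ^ q := fun x => by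
    rw [pow_add, e2q, e3q]
  -- opaque names for conjugates
  obtain ⟨s1, hs1⟩ : ∃ a : F, s ^ q = a := ⟨_, rfl⟩
  obtain ⟨s2, hs2⟩ : ∃ a : F, s1 ^ q = a := ⟨_, rfl⟩
  obtain ⟨s3, hs3⟩ : ∃ a : F, s2 ^ q = a := ⟨_, rfl⟩
  obtain ⟨t1, ht1⟩ : ∃ a : F, t ^ q = a := ⟨_, rfl⟩
  obtain ⟨t2, ht2⟩ : ∃ a : F, t1 ^ q = a := ⟨_, rfl⟩
  obtain ⟨t3, ht3⟩ : ∃ a : F, t2 ^ q = a := ⟨_, rfl⟩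
  have hs4 : s3 ^ q = s := by rw [← hs3, ← hs2, ← hs1]; exact pow4 s
  have ht4 : t3 ^ q = t := by rw [← ht3, ← ht2, ← ht1]; exact pow4 t
  rw [e2q, hs1, hs2] at hs h3
  rw [e2q, ht1, ht2] at ht h2
  -- nonvanishing facts
  have hw : t + t2 ≠ 0 := fun hc => ht (addz hc).symm
  have hA : s + t ≠ 0 := fun hc => h1 (addz hc)
  have hA2 : s2 + t2 ≠ 0 := by
    intro hc
    have h22 : s1 ^ q = t1 ^ q := by rw [hs2, ht2]; exact addz hc
    have h11 : s ^ q = t ^ q := by rw [hs1, ht1]; exact injq h22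
    exact h1 (injq h11)
  have hD1 : s + t2 ≠ 0 := fun hc => h2 (addz hc)
  have hD2 : s2 + t ≠ 0 := fun hc => h3 (addz hc).symm
  have hDq1 : s1 + t3 ≠ 0 := by
    have hid : s1 + t3 = (s + t2) ^ q := by rw [frq, hs1, ht3]
    rw [hid]; exact pow_ne_zero _ hD1
  have hDq2 : s3 + t1 ≠ 0 := by
    have hid : s3 + t1 = (s2 + t) ^ q := by rw [frq, hs3, ht1]
    rw [hid]; exact pow_ne_zero _ hD2
  -- Frobenius-squared of P and Q
  have hPP : (((s1+t1)*(t+t2) + (s+t)*(t1+t3)) ^ q) ^ q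
      = (s3+t3)*(t+t2) + (s2+t2)*(t1+t3) := by
    simp only [frq, mul_pow, hs1, hs2, hs3, hs4, ht1, ht2, ht3, ht4]; ring
  have hQQ : (((s*s1+t*t1)*(t+t2) + (s+t)*(t*t1+t2*t3)) ^ q) ^ q
      = (s2*s3+t2*t3)*(t+t2) + (s2+t2)*(t*t1+t2*t3) := by
    simp only [frq, mul_pow, hs1, hs2, hs3, hs4, ht1, ht2, ht3, ht4]; ring
  -- the key polynomial identity (char 2)
  have hKID : ((s1+t1)*(t+t2) + (s+t)*(t1+t3)) * ((s2*s3+t2*t3)*(t+t2) + (s2+t2)*(t*t1+t2*t3))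
      + ((s3+t3)*(t+t2) + (s2+t2)*(t1+t3)) * ((s*s1+t*t1)*(t+t2) + (s+t)*(t*t1+t2*t3))
      = (t+t2) * ((s1+t1)*(s3+t3)*((s+t2)*(s2+t)) + (s+t)*(s2+t2)*((s1+t3)*(s3+t1))) := by
    linear_combination (-s*s1*s2*s3*t - s*s1*s2*s3*t2 + s*s1*t*t2*t3 + s*s1*t2^2*t3 + s*s2*t*t1^2
      + s*s2*t2*t3^2 + s*t*t1*t2*t3 + s*t*t1^2*t2 + s*t*t2*t3^2 + s*t1*t2^2*t3 + 2*s*t2^2*t3^2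
      - s1*s3*t*t2^2 - s1*s3*t^2*t2 + s1*t*t2^2*t3 + s1*t2^3*t3 + s2*s3*t*t1*t2 + s2*s3*t^2*t1
      + s2*t*t1*t2*t3 + s2*t*t1^2*t2 + s2*t*t2*t3^2 + s2*t^2*t1*t3 + 2*s2*t^2*t1^2 + s3*t^2*t1*t2
      + s3*t^3*t1 + 3*t*t1*t2^2*t3 + t*t1^2*t2^2 + 2*t*t2^2*t3^2 + 3*t^2*t1*t2*t3 + 2*t^2*t1^2*t2
      + t^2*t2*t3^2 + t^3*t1*t3 + t1*t2^3*t3) * htwo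
  -- main reduction of the geometric condition
  have keyiff : (∃ l m : F, XvecPW q s l = XvecPW q t m ∧ XvecPW q s l ≠ 0) ↔
      (s1+t1)*(s3+t3)*((s+t2)*(s2+t)) = (s+t)*(s2+t2)*((s1+t3)*(s3+t1)) := by
    constructor
    · rintro ⟨l, m, heq, hne⟩
      have hl0 : l ≠ 0 := by
        rintro rfl
        apply hne
        funext i
        fin_cases i <;> simp [XvecPW, zero_pow hq20]
      have e0 : l + l ^ q ^ 2 = m + m ^ q ^ 2 := congrFun heq 0
      have e1 : l * s ^ q + l ^ q ^ 2 * s ^ q ^ 3 = m * t ^ q + m ^ q ^ 2 * t ^ q ^ 3 :=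
        congrFun heq 1
      have e2' : l * s + l ^ q ^ 2 * s ^ q ^ 2 = m * t + m ^ q ^ 2 * t ^ q ^ 2 :=
        congrFun heq 2
      have e3' : l * s ^ (q+1) + l ^ q ^ 2 * s ^ (q^2+q^3)
          = m * t ^ (q+1) + m ^ q ^ 2 * t ^ (q^2+q^3) := congrFun heq 3
      obtain ⟨l2, hl2⟩ : ∃ a : F, (l ^ q) ^ q = a := ⟨_, rfl⟩
      obtain ⟨m2, hm2⟩ : ∃ a : F, (m ^ q) ^ q = a := ⟨_, rfl⟩
      simp only [e2q, e3q, epq, e23q, hl2, hm2, hs1, hs2, hs3, ht1, ht2, ht3] at e0 e1 e2' e3'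
      -- e0 : l + l2 = m + m2 ; e1 : l*s1 + l2*s3 = m*t1 + m2*t3
      -- e2' : l*s + l2*s2 = m*t + m2*t2 ; e3' : l*(s1*s) + l2*(s2*s3) = m*(t1*t) + m2*(t2*t3)
      have hC1 : l * ((s1+t1)*(t+t2) + (s+t)*(t1+t3))
          = l2 * ((s3+t3)*(t+t2) + (s2+t2)*(t1+t3)) := by
        linear_combination (t+t2)*e1 + (t1+t3)*e2' + ((t+t2)*t3 + (t1+t3)*t2)*e0 +
          (l*t*t1 - l*t2*t3 - l2*s2*t1 - l2*s2*t3 - l2*s3*t - l2*s3*t2 - l2*t*t3 - l2*t1*t2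
            - 2*l2*t2*t3 + m*t*t1 + m*t*t3 + m*t1*t2 + m*t2*t3 + m2*t*t3 + m2*t1*t2
            + 2*m2*t2*t3) * htwo
      have hC2 : l * ((s*s1+t*t1)*(t+t2) + (s+t)*(t*t1+t2*t3))
          = l2 * ((s2*s3+t2*t3)*(t+t2) + (s2+t2)*(t*t1+t2*t3)) := by
        linear_combination (t+t2)*e3' + (t*t1+t2*t3)*e2' + ((t+t2)*t2*t3 + (t*t1+t2*t3)*t2)*e0 +
          (l*t^2*t1 - l*t2^2*t3 - l2*s2*s3*t - l2*s2*s3*t2 - l2*s2*t*t1 - l2*s2*t2*t3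
            - l2*t*t1*t2 - l2*t*t2*t3 - 2*l2*t2^2*t3 + m*t*t1*t2 + m*t*t2*t3 + m*t^2*t1
            + m*t2^2*t3 + m2*t*t1*t2 + m2*t*t2*t3 + 2*m2*t2^2*t3) * htwo
      have hPQ : l * (((s1+t1)*(t+t2) + (s+t)*(t1+t3))
            * ((s2*s3+t2*t3)*(t+t2) + (s2+t2)*(t*t1+t2*t3)))
          = l * (((s3+t3)*(t+t2) + (s2+t2)*(t1+t3))
            * ((s*s1+t*t1)*(t+t2) + (s+t)*(t*t1+t2*t3))) := by
        linear_combination ((s2*s3+t2*t3)*(t+t2) + (s2+t2)*(t*t1+t2*t3)) * hC1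
          - ((s3+t3)*(t+t2) + (s2+t2)*(t1+t3)) * hC2
      have hpq := mul_left_cancel₀ hl0 hPQ
      have hzero : (t+t2) * ((s1+t1)*(s3+t3)*((s+t2)*(s2+t))
          + (s+t)*(s2+t2)*((s1+t3)*(s3+t1))) = 0 := by
        linear_combination (-1 : F)*hKID + hpq +
          (s*s1*s2*t*t1 + s*s1*s2*t*t3 + s*s1*s2*t1*t2 + s*s1*s2*t2*t3 + 2*s*s1*s3*t*t2
            + s*s1*s3*t^2 + s*s1*s3*t2^2 + s*s1*t*t1*t2 + 3*s*s1*t*t2*t3 + s*s1*t^2*t3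
            + s*s1*t1*t2^2 + 2*s*s1*t2^2*t3 + s*s2*t*t1*t3 + s*s2*t*t1^2 + s*s2*t1*t2*t3
            + s*s2*t2*t3^2 + s*s3*t*t1*t2 + s*s3*t*t2*t3 + s*s3*t^2*t1 + s*s3*t2^2*t3
            + 2*s*t*t1*t2*t3 + s*t*t1^2*t2 + s*t*t2*t3^2 + s*t^2*t1*t3 + s*t1*t2^2*t3
            + 2*s*t2^2*t3^2 + 2*s2*t*t1*t2*t3 + s2*t*t1^2*t2 + s2*t*t2*t3^2 + 2*s2*t^2*t1*t3
            + 2*s2*t^2*t1^2 + s3*t*t1*t2^2 + s3*t*t2^2*t3 + 3*s3*t^2*t1*t2 + s3*t^2*t2*t3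
            + 2*s3*t^3*t1 + 3*t*t1*t2^2*t3 + t*t1^2*t2^2 + 2*t*t2^2*t3^2 + 5*t^2*t1*t2*t3
            + 2*t^2*t1^2*t2 + t^2*t2*t3^2 + 2*t^3*t1*t3) * htwo
      rcases mul_eq_zero.mp hzero with hc | hc
      · exact absurd hc hw
      · exact addz hc
    · intro hk
      have hsum0 : (s1+t1)*(s3+t3)*((s+t2)*(s2+t)) + (s+t)*(s2+t2)*((s1+t3)*(s3+t1)) = 0 := by
        rw [hk]; exact CharTwo.add_self_eq_zero _
      have hkk : ((s1+t1)*(t+t2) + (s+t)*(t1+t3)) * ((s2*s3+t2*t3)*(t+t2) + (s2+t2)*(t*t1+t2*t3))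
          = ((s3+t3)*(t+t2) + (s2+t2)*(t1+t3)) * ((s*s1+t*t1)*(t+t2) + (s+t)*(t*t1+t2*t3)) := by
        apply addz
        rw [hKID, hsum0, mul_zero]
      have hW : ∃ l : F, l ≠ 0 ∧
          l * ((s1+t1)*(t+t2) + (s+t)*(t1+t3))
            = ((l ^ q) ^ q) * ((s3+t3)*(t+t2) + (s2+t2)*(t1+t3)) ∧
          l * ((s*s1+t*t1)*(t+t2) + (s+t)*(t*t1+t2*t3))
            = ((l ^ q) ^ q) * ((s2*s3+t2*t3)*(t+t2) + (s2+t2)*(t*t1+t2*t3)) := by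
        by_cases hP : (s1+t1)*(t+t2) + (s+t)*(t1+t3) = 0
        · have hPP0 : (s3+t3)*(t+t2) + (s2+t2)*(t1+t3) = 0 := by
            rw [← hPP, hP, zero_pow hq0, zero_pow hq0]
          by_cases hQ : (s*s1+t*t1)*(t+t2) + (s+t)*(t*t1+t2*t3) = 0
          · have hQQ0 : (s2*s3+t2*t3)*(t+t2) + (s2+t2)*(t*t1+t2*t3) = 0 := by
              rw [← hQQ, hQ, zero_pow hq0, zero_pow hq0]
            exact ⟨1, one_ne_zero, by rw [hP, hPP0, mul_zero, mul_zero],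
              by rw [hQ, hQQ0, mul_zero, mul_zero]⟩
          · refine ⟨((s*s1+t*t1)*(t+t2) + (s+t)*(t*t1+t2*t3))⁻¹, inv_ne_zero hQ,
              by rw [hP, hPP0, mul_zero, mul_zero], ?_⟩
            rw [← hQQ]
            simp only [inv_pow]
            rw [inv_mul_cancel₀ hQ, inv_mul_cancel₀ (pow_ne_zero _ (pow_ne_zero _ hQ))]
        · have hPPn : (s3+t3)*(t+t2) + (s2+t2)*(t1+t3) ≠ 0 := by
            rw [← hPP]; exact pow_ne_zero _ (pow_ne_zero _ hP)
          refine ⟨((s1+t1)*(t+t2) + (s+t)*(t1+t3))⁻¹, inv_ne_zero hP, ?_, ?_⟩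
          · rw [← hPP]
            simp only [inv_pow]
            rw [inv_mul_cancel₀ hP, inv_mul_cancel₀ (pow_ne_zero _ (pow_ne_zero _ hP))]
          · rw [← hQQ]
            simp only [inv_pow]
            rw [inv_mul_eq_div, inv_mul_eq_div,
              div_eq_div_iff hP (pow_ne_zero _ (pow_ne_zero _ hP))]
            rw [hPP, hQQ]
            linear_combination -hkk
      obtain ⟨l, hl0, hC1, hC2⟩ := hW
      obtain ⟨l2, hl2⟩ : ∃ a : F, (l ^ q) ^ q = a := ⟨_, rfl⟩
      rw [hl2] at hC1 hC2
      have hl4 : (l2 ^ q) ^ q = l := by rw [← hl2, ← pow_mul, ← pow_mul, pow_mul, pow_mul]; exact pow4 l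
      obtain ⟨a, hadef⟩ : ∃ a : F, (l*(s+t) + l2*(s2+t2)) * (t+t2)⁻¹ = a := ⟨_, rfl⟩
      have haw : a * (t+t2) = l*(s+t) + l2*(s2+t2) := by
        rw [← hadef, mul_assoc, inv_mul_cancel₀ hw, mul_one]
      have hxq : ((l*(s+t) + l2*(s2+t2)) ^ q) ^ q = l*(s+t) + l2*(s2+t2) := by
        simp only [frq, mul_pow, hs1, hs2, hs3, hs4, ht1, ht2, ht3, ht4, hl2, hl4]; ring
      have hwq : ((t+t2) ^ q) ^ q = t + t2 := by
        simp only [frq, ht1, ht2, ht3, ht4]; ring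
      have ha2 : (a ^ q) ^ q = a := by
        rw [← hadef, mul_pow, mul_pow, inv_pow, inv_pow, hxq, hwq]
      have hstep1 : (t+t2) * (l*(s1+t1) + l2*(s3+t3)) = (t+t2) * (a*(t1+t3)) := by
        linear_combination hC1 + (t1+t3)*haw +
          (-a*t*t1 - a*t*t3 - a*t1*t2 - a*t2*t3 + l2*s2*t1 + l2*s2*t3 + l2*s3*t + l2*s3*t2
            + l2*t*t3 + l2*t1*t2 + 2*l2*t2*t3) * htwo
      have haw1 := mul_left_cancel₀ hw hstep1
      have hstep2 : (t+t2) * (l*(s*s1+t*t1) + l2*(s2*s3+t2*t3)) = (t+t2) * (a*(t*t1+t2*t3)) := by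
        linear_combination hC2 + (t*t1+t2*t3)*haw +
          (-a*t*t1*t2 - a*t*t2*t3 - a*t^2*t1 - a*t2^2*t3 + l2*s2*s3*t + l2*s2*s3*t2
            + l2*s2*t*t1 + l2*s2*t2*t3 + l2*t*t1*t2 + l2*t*t2*t3 + 2*l2*t2^2*t3) * htwo
      have haw2 := mul_left_cancel₀ hw hstep2
      refine ⟨l, l + a, ?_, ?_⟩
      · funext i
        fin_cases i
        · show l + l ^ q ^ 2 = (l+a) + (l+a) ^ q ^ 2
          simp only [e2q, frq, hl2, ha2]
          linear_combination (-a) * htwo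
        · show l * s ^ q + l ^ q ^ 2 * s ^ q ^ 3 = (l+a) * t ^ q + (l+a) ^ q ^ 2 * t ^ q ^ 3
          simp only [e2q, e3q, frq, hl2, ha2, hs1, hs2, hs3, ht1, ht2, ht3]
          linear_combination haw1 + (-l*t1 - l2*t3) * htwo
        · show l * s + l ^ q ^ 2 * s ^ q ^ 2 = (l+a) * t + (l+a) ^ q ^ 2 * t ^ q ^ 2
          simp only [e2q, frq, hl2, ha2, hs1, hs2, ht1, ht2]
          linear_combination (-1 : F)*haw + (-l*t - l2*t2) * htwo
        · show l * s ^ (q+1) + l ^ q ^ 2 * s ^ (q^2+q^3)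
            = (l+a) * t ^ (q+1) + (l+a) ^ q ^ 2 * t ^ (q^2+q^3)
          simp only [epq, e23q, e2q, frq, hl2, ha2, hs1, hs2, hs3, ht1, ht2, ht3]
          linear_combination haw2 + (-l*t*t1 - l2*t2*t3) * htwo
      · intro hXz
        have c0 : l + l ^ q ^ 2 = 0 := congrFun hXz 0
        have c2 : l * s + l ^ q ^ 2 * s ^ q ^ 2 = 0 := congrFun hXz 2
        simp only [e2q, hl2, hs1, hs2] at c0 c2
        have hll : l = l2 := addz c0
        have hfac : l * (s + s2) = 0 := by rw [← hll] at c2; linear_combination c2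
        rcases mul_eq_zero.mp hfac with hc | hc
        · exact hl0 hc
        · exact hs (addz hc).symm
  rw [keyiff]
  -- rho computations
  have hrho0 : rhoPW q s t = ((s+t)*(s2+t2)) / ((s+t2)*(s2+t)) := by
    simp only [rhoPW, e2q, hs1, hs2, ht1, ht2]
  obtain ⟨r, hr⟩ : ∃ r : F, rhoPW q s t = r := ⟨_, rfl⟩
  rw [hr] at hrho0
  have hrhat : rhoHatPW q s t = (r + r⁻¹)⁻¹ := by rw [rhoHatPW, hr]
  have hNne : (s+t)*(s2+t2) ≠ 0 := mul_ne_zero hA hA2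
  have hDne : (s+t2)*(s2+t) ≠ 0 := mul_ne_zero hD1 hD2
  have hDqne : (s1+t3)*(s3+t1) ≠ 0 := mul_ne_zero hDq1 hDq2
  have hr0 : r ≠ 0 := by rw [hrho0]; exact div_ne_zero hNne hDne
  have hrq : r ^ q = ((s1+t1)*(s3+t3)) / ((s1+t3)*(s3+t1)) := by
    rw [hrho0, div_pow,
      show ((s+t)*(s2+t2)) ^ q = (s1+t1)*(s3+t3) from by
        simp only [frq, mul_pow, hs1, hs2, hs3, ht1, ht2, ht3],
      show ((s+t2)*(s2+t)) ^ q = (s1+t3)*(s3+t1) from by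
        simp only [frq, mul_pow, hs1, hs3, ht1, ht3]]
  have hrq_iff : r ^ q = r ↔
      (s1+t1)*(s3+t3)*((s+t2)*(s2+t)) = (s+t)*(s2+t2)*((s1+t3)*(s3+t1)) := by
    rw [hrq, hrho0, div_eq_div_iff hDqne hDne]
  rw [← hrq_iff]
  have hr1 : r + 1 ≠ 0 := by
    intro hc
    have hND : (s+t)*(s2+t2) = (s+t2)*(s2+t) :=
      (div_eq_one_iff_eq hDne).mp (hrho0.symm.trans (addz hc))
    have hfac : (s+s2)*(t+t2) = 0 := by linear_combination hND + (s*t+s2*t2)*htwo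
    rcases mul_eq_zero.mp hfac with hc' | hc'
    · exact hs (addz hc').symm
    · exact ht (addz hc').symm
  have hzne : r + r⁻¹ ≠ 0 := by
    intro hc
    have h1' : r = r⁻¹ := addz hc
    have h2' : r * r = 1 := by nth_rewrite 1 [h1']; exact inv_mul_cancel₀ hr0
    have h3' : (r+1)*(r+1) = 0 := by linear_combination h2' + (r+1)*htwo
    exact hr1 (mul_self_eq_zero.mp h3')
  have hhatne : rhoHatPW q s t ≠ 0 := by rw [hrhat]; exact inv_ne_zero hzne
  obtain ⟨u, hu⟩ : ∃ u : F, r * (r+1)⁻¹ = u := ⟨_, rfl⟩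
  have e1 : u * (r+1) = r := by rw [← hu, mul_assoc, inv_mul_cancel₀ hr1, mul_one]
  have hu1 : u + 1 ≠ 0 := by
    intro hc
    rw [addz hc, one_mul] at e1
    exact one_ne_zero (by linear_combination e1)
  have hrr : r * (r + r⁻¹) = r * r + 1 := by rw [mul_add, mul_inv_cancel₀ hr0]
  have hmul' : (r * r + 1) * (u * u + u) = r := by
    linear_combination ((r+1)*u+1) * e1 + (-r*u^2 + r^2*u) * htwo
  have hmul : (r + r⁻¹) * (u * u + u) = 1 := by
    apply mul_left_cancel₀ hr0
    rw [mul_one, ← mul_assoc, hrr, hmul']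
  have hu_eq : rhoHatPW q s t = u * u + u := by rw [hrhat]; exact inv_eq_of_mul_eq_one_right hmul
  have hru : r * (u + 1) = u := by linear_combination e1 + (r - u) * htwo
  have hr_u : r = u * (u+1)⁻¹ := by rw [eq_mul_inv_iff_mul_eq₀ hu1]; exact hru
  have hterm : ∀ i : ℕ, rhoHatPW q s t ^ 2 ^ i = u ^ 2 ^ (i+1) - u ^ 2 ^ i := by
    intro i
    rw [CharTwo.sub_eq_add, hu_eq, add_pow_expChar_pow,
      show (2:ℕ) ^ (i+1) = 2 * 2 ^ i from by rw [pow_succ, Nat.mul_comm], pow_mul, pow_two]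
  have hsum : ∑ i ∈ Finset.range h, rhoHatPW q s t ^ 2 ^ i = u ^ q - u := by
    calc ∑ i ∈ Finset.range h, rhoHatPW q s t ^ 2 ^ i
        = ∑ i ∈ Finset.range h, (u ^ 2 ^ (i+1) - u ^ 2 ^ i) :=
          Finset.sum_congr rfl (fun i _ => hterm i)
      _ = u ^ 2 ^ h - u ^ 2 ^ 0 := Finset.sum_range_sub (fun j => u ^ 2 ^ j) h
      _ = u ^ q - u := by rw [← hq, pow_zero, pow_one]
  constructor
  · intro hrq_eq
    have huq : u ^ q = u := by rw [← hu, mul_pow, inv_pow, frq, one_pow, hrq_eq]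
    refine ⟨hhatne, ?_, ?_⟩
    · rw [hrhat, inv_pow, frq, inv_pow, hrq_eq]
    · rw [hsum, huq, sub_self]
  · rintro ⟨-, -, htr⟩
    rw [hsum] at htr
    have huq : u ^ q = u := sub_eq_zero.mp htr
    rw [hr_u, mul_pow, inv_pow, frq, one_pow, huq]
end

section
/- For every t ∈ F \ F_{q^2}, the vector w_t = (w₁, …, w₆) satisfies: (i) w₂ = w₁^q, w₄ = w₃^q, w₆ = w₅^q (so w_t belongs to the F_q-space Ṽ = {(x, x^q, y, y^q, z, z^q) : x, y, z ∈ F_{q^2}}); (ii) Q(w_t) = 0; (iii) w₃ + w₄ = (t + t^(q^2))^(q+1) ≠ 0, so in particular w₃ ≠ w₄ and w_t does not lie in the hyperplane Γ = {(x, x^q, c, c, z, z^q) : x, z ∈ F_{q^2}, c ∈ F_q}. -/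
/-- The Plücker coordinate vector `w_t = κ(m_𝐭)` in `F^6`. -/
def wvecPW {F : Type*} [Field F] (q : ℕ) (t : F) : Fin 6 → F :=
  ![t ^ q + t ^ q ^ 3,
    t + t ^ q ^ 2,
    t ^ (1 + q) + t ^ (q ^ 2 + q ^ 3),
    t ^ (1 + q ^ 3) + t ^ (q + q ^ 2),
    t ^ (1 + q + q ^ 3) + t ^ (q + q ^ 2 + q ^ 3),
    t ^ (1 + q + q ^ 2) + t ^ (1 + q ^ 2 + q ^ 3)]

/-- The quadratic form `Q(X) = X₁X₆ + X₂X₅ + X₃X₄` on `F^6`. -/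
def Q6PW {F : Type*} [Field F] (X : Fin 6 → F) : F :=
  X 0 * X 5 + X 1 * X 4 + X 2 * X 3

theorem stmt_14 (h q : ℕ) (hh : 1 ≤ h) (hq : q = 2 ^ h)
    (F : Type*) [Field F] [Fintype F] (hF : Fintype.card F = q ^ 4)
    (t : F) (ht : t ^ q ^ 2 ≠ t) :
    (wvecPW q t 1 = (wvecPW q t 0) ^ q ∧ wvecPW q t 3 = (wvecPW q t 2) ^ q ∧
      wvecPW q t 5 = (wvecPW q t 4) ^ q) ∧
    Q6PW (wvecPW q t) = 0 ∧
    (wvecPW q t 2 + wvecPW q t 3 = (t + t ^ q ^ 2) ^ (q + 1) ∧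
      (t + t ^ q ^ 2) ^ (q + 1) ≠ 0 ∧
      wvecPW q t 2 ≠ wvecPW q t 3 ∧
      ¬ ∃ x c z : F, x ^ q ^ 2 = x ∧ c ^ q = c ∧ z ^ q ^ 2 = z ∧
          wvecPW q t = ![x, x ^ q, c, c, z, z ^ q]) := by
  -- characteristic 2
  haveI hchar : CharP F 2 := by
    obtain ⟨p, hpc⟩ := CharP.exists F
    haveI := hpc
    obtain ⟨n, hpprime, hcard'⟩ := FiniteField.card F p
    have hdvd : p ∣ 2 ^ (4 * h) := by
      have hc2 : Fintype.card F = 2 ^ (4 * h) := by rw [hF, hq, ← pow_mul, mul_comm]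
      rw [hc2] at hcard'
      exact hcard' ▸ dvd_pow_self p n.2.ne'
    have hp2 : p = 2 :=
      (Nat.prime_dvd_prime_iff_eq hpprime Nat.prime_two).mp
        (hpprime.dvd_of_dvd_pow hdvd)
    exact hp2 ▸ hpc
  haveI : Fact (Nat.Prime 2) := ⟨Nat.prime_two⟩
  have h20 : (2 : F) = 0 := by
    have := CharP.cast_eq_zero F 2; simpa using this
  have frob : ∀ x y : F, (x + y) ^ q = x ^ q + y ^ q := by
    intro x y; rw [hq]; exact add_pow_char_pow x y 2 h
  have hq4 : t ^ q ^ 4 = t := by rw [← hF]; exact FiniteField.pow_card t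
  have fb : (t ^ q) ^ q = t ^ q ^ 2 := by rw [← pow_mul, ← pow_two]
  have fc : (t ^ q ^ 2) ^ q = t ^ q ^ 3 := by rw [← pow_mul, ← pow_succ]
  have fd : (t ^ q ^ 3) ^ q = t := by rw [← pow_mul, ← pow_succ]; exact hq4
  have e1 : t ^ (1 + q) = t * t ^ q := by rw [pow_add, pow_one]
  have e2 : t ^ (q ^ 2 + q ^ 3) = t ^ q ^ 2 * t ^ q ^ 3 := by rw [pow_add]
  have e3 : t ^ (1 + q ^ 3) = t * t ^ q ^ 3 := by rw [pow_add, pow_one]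
  have e4 : t ^ (q + q ^ 2) = t ^ q * t ^ q ^ 2 := by rw [pow_add]
  have e5 : t ^ (1 + q + q ^ 3) = t * t ^ q * t ^ q ^ 3 := by
    rw [pow_add, pow_add, pow_one]
  have e6 : t ^ (q + q ^ 2 + q ^ 3) = t ^ q * t ^ q ^ 2 * t ^ q ^ 3 := by
    rw [pow_add, pow_add]
  have e7 : t ^ (1 + q + q ^ 2) = t * t ^ q * t ^ q ^ 2 := by
    rw [pow_add, pow_add, pow_one]
  have e8 : t ^ (1 + q ^ 2 + q ^ 3) = t * t ^ q ^ 2 * t ^ q ^ 3 := by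
    rw [pow_add, pow_add, pow_one]
  have hmul : ∀ x y : F, (x * y) ^ q = x ^ q * y ^ q := fun x y => mul_pow x y q
  -- part (i)
  have part1a : wvecPW q t 1 = (wvecPW q t 0) ^ q := by
    simp only [wvecPW, Matrix.cons_val_zero, Matrix.cons_val_one, Matrix.head_cons]
    rw [frob, fb, fd, add_comm]
  have part1b : wvecPW q t 3 = (wvecPW q t 2) ^ q := by
    simp only [wvecPW]
    show t ^ (1 + q ^ 3) + t ^ (q + q ^ 2) = (t ^ (1 + q) + t ^ (q ^ 2 + q ^ 3)) ^ q
    rw [frob, e1, e2, e3, e4, hmul, hmul, fb, fc, fd]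
    ring
  have part1c : wvecPW q t 5 = (wvecPW q t 4) ^ q := by
    simp only [wvecPW]
    show t ^ (1 + q + q ^ 2) + t ^ (1 + q ^ 2 + q ^ 3)
        = (t ^ (1 + q + q ^ 3) + t ^ (q + q ^ 2 + q ^ 3)) ^ q
    rw [frob, e5, e6, e7, e8, hmul, hmul, hmul, hmul, fb, fc, fd]
    ring
  have hw2 : wvecPW q t 2 = t * t ^ q + t ^ q ^ 2 * t ^ q ^ 3 := by
    simp only [wvecPW]
    show t ^ (1 + q) + t ^ (q ^ 2 + q ^ 3) = _
    rw [e1, e2]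
  have hw3 : wvecPW q t 3 = t * t ^ q ^ 3 + t ^ q * t ^ q ^ 2 := by
    simp only [wvecPW]
    show t ^ (1 + q ^ 3) + t ^ (q + q ^ 2) = _
    rw [e3, e4]
  -- part (ii)
  have part2 : Q6PW (wvecPW q t) = 0 := by
    simp only [Q6PW, wvecPW]
    show (t ^ q + t ^ q ^ 3) * (t ^ (1 + q + q ^ 2) + t ^ (1 + q ^ 2 + q ^ 3))
        + (t + t ^ q ^ 2) * (t ^ (1 + q + q ^ 3) + t ^ (q + q ^ 2 + q ^ 3))
        + (t ^ (1 + q) + t ^ (q ^ 2 + q ^ 3)) * (t ^ (1 + q ^ 3) + t ^ (q + q ^ 2)) = 0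
    rw [e1, e2, e3, e4, e5, e6, e7, e8]
    set B := t ^ q
    set C := t ^ q ^ 2
    set D := t ^ q ^ 3
    linear_combination (t * B ^ 2 * C + t ^ 2 * B * D + t * C * D ^ 2 + B * C ^ 2 * D
      + 2 * t * B * C * D) * h20
  -- part (iii)
  have hsumq : (t + t ^ q ^ 2) ^ q = t ^ q + t ^ q ^ 3 := by rw [frob, fc]
  have part3a : wvecPW q t 2 + wvecPW q t 3 = (t + t ^ q ^ 2) ^ (q + 1) := by
    rw [hw2, hw3, pow_add, pow_one, hsumq]
    ring
  have hbase_ne : t + t ^ q ^ 2 ≠ 0 := by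
    intro h0
    exact ht (by linear_combination h0 - t * h20)
  have part3b : (t + t ^ q ^ 2) ^ (q + 1) ≠ 0 := pow_ne_zero _ hbase_ne
  have part3c : wvecPW q t 2 ≠ wvecPW q t 3 := by
    intro heq
    apply part3b
    rw [← part3a, heq, CharTwo.add_self_eq_zero]
  refine ⟨⟨part1a, part1b, part1c⟩, part2, part3a, part3b, part3c, ?_⟩
  rintro ⟨x, c, z, hx, hcq, hz, heq⟩
  apply part3c
  have h2 := congrFun heq 2
  have h3 := congrFun heq 3
  simp only [Matrix.cons_val_two, Matrix.cons_val_three, Matrix.tail_cons, Matrix.head_cons] at h2 h3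
  rw [h2, h3]
end
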